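/- arXiv:1909.00508 — 4 statements merged into one kernel-verified Lean document; each statement's English description precedes it below -/
import Mathlib

section
/- (Theorem 1, existence of a sequential competitive equilibrium) Suppose (ŷ^G, ŷ^L, x̂, ẑ, θ̂) is feasible for (SPP-P) and admits multipliers (λ, μ, γ) making it a KKT point of (SPP-P). Define nodal prices P_{1,i} := λ_{1,i} and P_{2,i}(w) := λ_{2,i}(w). Then: (a) for every generator (i,k), the pair (ŷ^G_{1,k}, ŷ^G_{2,k}(·)) maximizes the (GEN-P) objective P_{1,i} y_1 − c_{1,k}(y_1) + Σ_w (P_{2,i}(w) y_2(w) − c_{2,k}(y_2(w))) p_w over all y_1 ≥ 0, y_2(w) ≥ 0; (b) for every LSE (i,k), the tuple (ŷ^L_{1,k}, ŷ^L_{2,k}(·), x̂_k(·), ẑ_k(·)) maximizes the (LSE-P) objective −P_{1,i} y_1 − Σ_w P_{2,i}(w) y_2(w) p_w − Σ_w (c_{dr,k}(x(w)) + c_{bo,k}(z(w))) p_w over its feasible set; and (c) markets clear in both stages in every scenario: Σ over all generators of ŷ^G_{1,k} = Σ over all LSEs of ŷ^L_{1,k}, and Σ over all generators of ŷ^G_{2,k}(w)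 = Σ over all LSEs of ŷ^L_{2,k}(w) for every w. In other words, the allocation together with the prices (λ_1, λ_2(·)) is a sequential competitive equilibrium. -/
open scoped BigOperators

/-- A point of the two-stage social planner's problem (SPP-P): first- and second-stage
generations, consumptions, demand response, blackouts, and phase angles. -/
structure MarketPoint (N G L W : Type) where
  yG1 : G → ℝ
  yG2 : G → W → ℝ
  yL1 : L → ℝ
  yL2 : L → W → ℝ
  xdr : L → W → ℝ
  zbo : L → W → ℝ
  th1 : N → ℝ
  th2 : W → N → ℝ

/-- Lagrange multipliers of (SPP-P): nodal prices, demand-coverage multipliers and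
line-limit multipliers. -/
structure SPPMultipliers (N L W : Type) where
  lam1 : N → ℝ
  lam2 : W → N → ℝ
  mu : L → W → ℝ
  gam1 : N → N → ℝ
  gam2 : W → N → N → ℝ

variable {N G L W : Type} [Fintype N] [Fintype G] [Fintype L] [Fintype W] [DecidableEq N]

/-- Feasibility for (SPP-P). -/
def SPPFeasible (nodeG : G → N) (nodeL : L → N) (B fmax : N → N → ℝ)
    (D : L → ℝ) (ren : L → W → ℝ) (P : MarketPoint N G L W) : Prop :=
  (∀ k, 0 ≤ P.yG1 k) ∧ (∀ k w, 0 ≤ P.yG2 k w) ∧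
  (∀ k, 0 ≤ P.yL1 k) ∧ (∀ k w, 0 ≤ P.yL2 k w) ∧
  (∀ k w, 0 ≤ P.xdr k w) ∧ (∀ k w, 0 ≤ P.zbo k w) ∧
  (∀ i, (∑ k, if nodeG k = i then P.yG1 k else 0)
        - (∑ k, if nodeL k = i then P.yL1 k else 0)
      = ∑ j, B i j * (P.th1 i - P.th1 j)) ∧
  (∀ (w : W) (i : N), (∑ k, if nodeG k = i then P.yG2 k w else 0)
        - (∑ k, if nodeL k = i then P.yL2 k w else 0)
      = ∑ j, B i j * (P.th2 w i - P.th2 w j - P.th1 i + P.th1 j)) ∧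
  (∀ i j, B i j * (P.th1 i - P.th1 j) ≤ fmax i j) ∧
  (∀ (w : W) (i j : N), B i j * (P.th2 w i - P.th2 w j) ≤ fmax i j) ∧
  (∀ (k : L) (w : W), D k - ren k w ≤ P.yL1 k + P.yL2 k w + P.xdr k w + P.zbo k w)

/-- Objective (aggregate welfare) of (SPP-P). -/
noncomputable def SPPObj (p : W → ℝ) (c1 c2 : G → ℝ → ℝ) (cdr cbo : L → ℝ → ℝ)
    (P : MarketPoint N G L W) : ℝ :=
  -(∑ k, (c1 k (P.yG1 k) + ∑ w, c2 k (P.yG2 k w) * p w))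
    - ∑ k, ∑ w, (cdr k (P.xdr k w) + cbo k (P.zbo k w)) * p w

/-- KKT conditions of (SPP-P). -/
def SPPKKT (nodeG : G → N) (nodeL : L → N) (B fmax : N → N → ℝ)
    (p : W → ℝ) (c1 c2 : G → ℝ → ℝ) (cdr cbo : L → ℝ → ℝ)
    (D : L → ℝ) (ren : L → W → ℝ)
    (P : MarketPoint N G L W) (M : SPPMultipliers N L W) : Prop :=
  SPPFeasible nodeG nodeL B fmax D ren P ∧
  (∀ k w, 0 ≤ M.mu k w) ∧
  (∀ i j, 0 ≤ M.gam1 i j) ∧ (∀ (w : W) (i j : N), 0 ≤ M.gam2 w i j) ∧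
  (∀ k : G, M.lam1 (nodeG k) ≤ deriv (c1 k) (P.yG1 k)) ∧
  (∀ k : G, 0 < P.yG1 k → deriv (c1 k) (P.yG1 k) = M.lam1 (nodeG k)) ∧
  (∀ (k : G) (w : W), M.lam2 w (nodeG k) ≤ deriv (c2 k) (P.yG2 k w)) ∧
  (∀ (k : G) (w : W), 0 < P.yG2 k w → deriv (c2 k) (P.yG2 k w) = M.lam2 w (nodeG k)) ∧
  (∀ k : L, ∑ w, M.mu k w * p w ≤ M.lam1 (nodeL k)) ∧
  (∀ k : L, 0 < P.yL1 k → M.lam1 (nodeL k) = ∑ w, M.mu k w * p w) ∧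
  (∀ (k : L) (w : W), M.mu k w ≤ M.lam2 w (nodeL k)) ∧
  (∀ (k : L) (w : W), 0 < P.yL2 k w → M.lam2 w (nodeL k) = M.mu k w) ∧
  (∀ (k : L) (w : W), M.mu k w ≤ deriv (cdr k) (P.xdr k w)) ∧
  (∀ (k : L) (w : W), 0 < P.xdr k w → deriv (cdr k) (P.xdr k w) = M.mu k w) ∧
  (∀ (k : L) (w : W), M.mu k w ≤ deriv (cbo k) (P.zbo k w)) ∧
  (∀ (k : L) (w : W), 0 < P.zbo k w → deriv (cbo k) (P.zbo k w) = M.mu k w) ∧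
  (∀ (k : L) (w : W),
      D k - ren k w < P.yL1 k + P.yL2 k w + P.xdr k w + P.zbo k w → M.mu k w = 0) ∧
  (∀ i, ∑ j, B i j * (M.lam1 i - M.lam1 j
        - (∑ w, (M.lam2 w i - M.lam2 w j) * p w) + M.gam1 i j - M.gam1 j i) = 0) ∧
  (∀ (w : W) (i : N),
      ∑ j, B i j * (M.lam2 w i - M.lam2 w j + M.gam2 w i j - M.gam2 w j i) = 0) ∧
  (∀ i j, M.gam1 i j * (B i j * (P.th1 i - P.th1 j) - fmax i j) = 0) ∧
  (∀ (w : W) (i j : N), M.gam2 w i j * (B i j * (P.th2 w i - P.th2 w j) - fmax i j) = 0)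

/-- Assumption 1: all cost functions are strictly convex, (strictly) increasing,
differentiable and nonnegative on [0,∞). -/
def Assumption1 (c1 c2 : G → ℝ → ℝ) (cdr cbo : L → ℝ → ℝ) : Prop :=
  (∀ k : G, StrictConvexOn ℝ (Set.Ici (0:ℝ)) (c1 k) ∧ StrictMonoOn (c1 k) (Set.Ici (0:ℝ)) ∧
      Differentiable ℝ (c1 k) ∧ ∀ y ∈ Set.Ici (0:ℝ), 0 ≤ c1 k y) ∧
  (∀ k : G, StrictConvexOn ℝ (Set.Ici (0:ℝ)) (c2 k) ∧ StrictMonoOn (c2 k) (Set.Ici (0:ℝ)) ∧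
      Differentiable ℝ (c2 k) ∧ ∀ y ∈ Set.Ici (0:ℝ), 0 ≤ c2 k y) ∧
  (∀ k : L, StrictConvexOn ℝ (Set.Ici (0:ℝ)) (cdr k) ∧ StrictMonoOn (cdr k) (Set.Ici (0:ℝ)) ∧
      Differentiable ℝ (cdr k) ∧ ∀ y ∈ Set.Ici (0:ℝ), 0 ≤ cdr k y) ∧
  (∀ k : L, StrictConvexOn ℝ (Set.Ici (0:ℝ)) (cbo k) ∧ StrictMonoOn (cbo k) (Set.Ici (0:ℝ)) ∧
      Differentiable ℝ (cbo k) ∧ ∀ y ∈ Set.Ici (0:ℝ), 0 ≤ cbo k y)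

/-- Optimality of generator (i,k)'s plan for its combined two-stage problem (GEN-P),
given nodal prices. -/
def GenOpt (p : W → ℝ) (c1 c2 : G → ℝ → ℝ) (P1 : N → ℝ) (P2 : W → N → ℝ)
    (nodeG : G → N) (k : G) (y1 : ℝ) (y2 : W → ℝ) : Prop :=
  0 ≤ y1 ∧ (∀ w, 0 ≤ y2 w) ∧
  ∀ (y1' : ℝ) (y2' : W → ℝ), 0 ≤ y1' → (∀ w, 0 ≤ y2' w) →
    P1 (nodeG k) * y1' - c1 k y1' + ∑ w, (P2 w (nodeG k) * y2' w - c2 k (y2' w)) * p w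
      ≤ P1 (nodeG k) * y1 - c1 k y1 + ∑ w, (P2 w (nodeG k) * y2 w - c2 k (y2 w)) * p w

/-- Optimality of LSE (i,k)'s plan for its combined two-stage problem (LSE-P),
given nodal prices. -/
def LSEOpt (p : W → ℝ) (cdr cbo : L → ℝ → ℝ) (P1 : N → ℝ) (P2 : W → N → ℝ)
    (nodeL : L → N) (D : L → ℝ) (ren : L → W → ℝ)
    (k : L) (y1 : ℝ) (y2 x z : W → ℝ) : Prop :=
  0 ≤ y1 ∧ (∀ w, 0 ≤ y2 w) ∧ (∀ w, 0 ≤ x w) ∧ (∀ w, 0 ≤ z w) ∧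
  (∀ w, D k - ren k w ≤ y1 + y2 w + x w + z w) ∧
  ∀ (y1' : ℝ) (y2' x' z' : W → ℝ), 0 ≤ y1' → (∀ w, 0 ≤ y2' w) → (∀ w, 0 ≤ x' w) →
    (∀ w, 0 ≤ z' w) → (∀ w, D k - ren k w ≤ y1' + y2' w + x' w + z' w) →
    -(P1 (nodeL k)) * y1' - (∑ w, P2 w (nodeL k) * y2' w * p w)
        - (∑ w, (cdr k (x' w) + cbo k (z' w)) * p w)
      ≤ -(P1 (nodeL k)) * y1 - (∑ w, P2 w (nodeL k) * y2 w * p w)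
        - (∑ w, (cdr k (x w) + cbo k (z w)) * p w)

/-- Market clearing in both stages in all scenarios. -/
def MarketClears (P : MarketPoint N G L W) : Prop :=
  ((∑ k, P.yG1 k) = ∑ k, P.yL1 k) ∧ ∀ w : W, (∑ k, P.yG2 k w) = ∑ k, P.yL2 k w

/-- Feasibility for the ISO problem: nonnegativity, nodal balance and line limits. -/
def ISOFeasible (nodeG : G → N) (nodeL : L → N) (B fmax : N → N → ℝ)
    (yG1 : G → ℝ) (yG2 : G → W → ℝ) (yL1 : L → ℝ) (yL2 : L → W → ℝ)
    (th1 : N → ℝ) (th2 : W → N → ℝ) : Prop :=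
  (∀ k, 0 ≤ yG1 k) ∧ (∀ k w, 0 ≤ yG2 k w) ∧ (∀ k, 0 ≤ yL1 k) ∧ (∀ k w, 0 ≤ yL2 k w) ∧
  (∀ i, (∑ k, if nodeG k = i then yG1 k else 0) - (∑ k, if nodeL k = i then yL1 k else 0)
      = ∑ j, B i j * (th1 i - th1 j)) ∧
  (∀ (w : W) (i : N), (∑ k, if nodeG k = i then yG2 k w else 0)
        - (∑ k, if nodeL k = i then yL2 k w else 0)
      = ∑ j, B i j * (th2 w i - th2 w j - th1 i + th1 j)) ∧
  (∀ i j, B i j * (th1 i - th1 j) ≤ fmax i j) ∧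
  (∀ (w : W) (i j : N), B i j * (th2 w i - th2 w j) ≤ fmax i j)

/-- Objective of the ISO problem, given nodal prices. -/
noncomputable def ISOObj (nodeG : G → N) (nodeL : L → N) (p : W → ℝ)
    (P1 : N → ℝ) (P2 : W → N → ℝ)
    (yG1 : G → ℝ) (yG2 : G → W → ℝ) (yL1 : L → ℝ) (yL2 : L → W → ℝ) : ℝ :=
  (∑ i, P1 i * ((∑ k, if nodeL k = i then yL1 k else 0)
      - (∑ k, if nodeG k = i then yG1 k else 0)))
  + ∑ w, (∑ i, P2 w i * ((∑ k, if nodeL k = i then yL2 k w else 0)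
      - (∑ k, if nodeG k = i then yG2 k w else 0))) * p w


lemma tangent_line_le {f : ℝ → ℝ} (hf : ConvexOn ℝ (Set.Ici (0:ℝ)) f)
    (hd : Differentiable ℝ f) {a b : ℝ} (ha : 0 ≤ a) (hb : 0 ≤ b) :
    f a + deriv f a * (b - a) ≤ f b := by
  rcases lt_trichotomy a b with h | h | h
  · have hs := hf.deriv_le_slope ha hb h (hd a)
    rw [slope_def_field] at hs
    have hba : 0 < b - a := sub_pos.mpr h
    rw [le_div_iff₀ hba] at hs
    linarith
  · subst h; simp
  · have hs := hf.slope_le_deriv hb ha h (hd a)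
    rw [slope_def_field] at hs
    have hba : 0 < a - b := sub_pos.mpr h
    rw [div_le_iff₀ hba] at hs
    nlinarith

lemma profit_max {f : ℝ → ℝ} (hf : ConvexOn ℝ (Set.Ici (0:ℝ)) f) (hd : Differentiable ℝ f)
    {lam a : ℝ} (ha : 0 ≤ a) (hle : lam ≤ deriv f a) (heq : 0 < a → deriv f a = lam)
    {b : ℝ} (hb : 0 ≤ b) : lam * b - f b ≤ lam * a - f a := by
  have ht := tangent_line_le hf hd ha hb
  rcases ha.lt_or_eq with h | h
  · have := heq h; nlinarith
  · have ha0 : a = 0 := h.symm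
    subst ha0
    have h2 : lam * b ≤ deriv f 0 * b := mul_le_mul_of_nonneg_right hle hb
    rw [sub_zero] at ht
    nlinarith

lemma coeff_step {c a b : ℝ} (hc : c ≤ 0) (hb : 0 ≤ b) (ha : 0 ≤ a)
    (heq : 0 < a → c = 0) : c * b ≤ c * a := by
  rcases ha.lt_or_eq with h | h
  · rw [heq h]; simp
  · rw [← h]
    simpa using mul_nonpos_of_nonpos_of_nonneg hc hb

lemma sum_antisymm {N : Type} [Fintype N] (B : N → N → ℝ) (hB : ∀ i j, B i j = B j i)
    (f : N → ℝ) : ∑ i, ∑ j, B i j * (f i - f j) = 0 := by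
  have h : (∑ i, ∑ j, B i j * (f i - f j)) = -(∑ i, ∑ j, B i j * (f i - f j)) := by
    calc (∑ i, ∑ j, B i j * (f i - f j)) = ∑ j, ∑ i, B i j * (f i - f j) := Finset.sum_comm
    _ = ∑ i, ∑ j, -(B i j * (f i - f j)) := by
        refine Finset.sum_congr rfl fun i _ => Finset.sum_congr rfl fun j _ => ?_
        rw [hB j i]; ring
    _ = -(∑ i, ∑ j, B i j * (f i - f j)) := by simp
  linarith

/-- Theorem 1 (existence of a sequential competitive equilibrium): a KKT point of
(SPP-P) together with nodal prices given by the balance multipliers (λ₁, λ₂(·))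
constitutes a sequential competitive equilibrium: each generator's and each LSE's
allocation is optimal for its price-taking problem, and markets clear in both stages
in all scenarios. -/
theorem kkt_point_gives_sequential_competitive_equilibrium
    (nodeG : G → N) (nodeL : L → N) (B fmax : N → N → ℝ)
    (hBsymm : ∀ i j, B i j = B j i)
    (hfsymm : ∀ i j, fmax i j = fmax j i) (hfnonneg : ∀ i j, 0 ≤ fmax i j)
    (p : W → ℝ) (hp : ∀ w, 0 < p w) (hpsum : ∑ w, p w = 1)
    (c1 c2 : G → ℝ → ℝ) (cdr cbo : L → ℝ → ℝ)
    (hA1 : Assumption1 c1 c2 cdr cbo)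
    (D : L → ℝ) (hD : ∀ k, 0 ≤ D k)
    (ren : L → W → ℝ) (hren : ∀ k w, 0 ≤ ren k w)
    (P : MarketPoint N G L W) (M : SPPMultipliers N L W)
    (hKKT : SPPKKT nodeG nodeL B fmax p c1 c2 cdr cbo D ren P M) :
    -- (a) every generator's allocation maximizes its (GEN-P) objective
    (∀ k : G, GenOpt p c1 c2 M.lam1 M.lam2 nodeG k (P.yG1 k) (P.yG2 k))
    -- (b) every LSE's allocation maximizes its (LSE-P) objective
    ∧ (∀ k : L, LSEOpt p cdr cbo M.lam1 M.lam2 nodeL D ren k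
        (P.yL1 k) (P.yL2 k) (P.xdr k) (P.zbo k))
    -- (c) markets clear in both stages in every scenario
    ∧ MarketClears P := by
  obtain ⟨hfeas, hmu0, hg1, hg2, hc1le, hc1eq, hc2le, hc2eq, hL1le, hL1eq, hL2le, hL2eq,
    hdrle, hdreq, hbole, hboeq, hcomp, hnode1, hnode2, hcs1, hcs2⟩ := hKKT
  obtain ⟨hG1n, hG2n, hL1n, hL2n, hxn, hzn, hbal1, hbal2, hlim1, hlim2, hcov⟩ := hfeas
  refine ⟨?_, ?_, ?_, ?_⟩
  · -- (a) generators
    intro k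
    refine ⟨hG1n k, fun w => hG2n k w, ?_⟩
    intro y1' y2' h1 h2
    refine add_le_add
      (profit_max (hA1.1 k).1.convexOn (hA1.1 k).2.2.1 (hG1n k) (hc1le k)
        (fun h => hc1eq k h) h1)
      (Finset.sum_le_sum fun w _ => mul_le_mul_of_nonneg_right
        (profit_max (hA1.2.1 k).1.convexOn (hA1.2.1 k).2.2.1 (hG2n k w) (hc2le k w)
          (fun h => hc2eq k w h) (h2 w)) (hp w).le)
  · -- (b) LSEs
    intro k
    refine ⟨hL1n k, fun w => hL2n k w, fun w => hxn k w, fun w => hzn k w,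
      fun w => hcov k w, ?_⟩
    intro y1' y2' x' z' hy1 hy2 hx hz hcv
    have hid : ∀ (y1 : ℝ) (y2 x z : W → ℝ),
        (-(M.lam1 (nodeL k)) * y1 - (∑ w, M.lam2 w (nodeL k) * y2 w * p w)
          - ∑ w, (cdr k (x w) + cbo k (z w)) * p w)
        + ∑ w, M.mu k w * (y1 + y2 w + x w + z w - (D k - ren k w)) * p w
        = ((∑ w, M.mu k w * p w) - M.lam1 (nodeL k)) * y1
          + ∑ w, ((M.mu k w - M.lam2 w (nodeL k)) * y2 w
              + (M.mu k w * x w - cdr k (x w)) + (M.mu k w * z w - cbo k (z w))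
              - M.mu k w * (D k - ren k w)) * p w := by
      intro y1 y2 x z
      have key2 : ∑ w, (M.mu k w * (y1 + y2 w + x w + z w - (D k - ren k w)) * p w
            - M.lam2 w (nodeL k) * y2 w * p w - (cdr k (x w) + cbo k (z w)) * p w)
          = ∑ w, (M.mu k w * p w * y1
            + ((M.mu k w - M.lam2 w (nodeL k)) * y2 w + (M.mu k w * x w - cdr k (x w))
              + (M.mu k w * z w - cbo k (z w)) - M.mu k w * (D k - ren k w)) * p w) :=
        Finset.sum_congr rfl fun w _ => by ring
      rw [Finset.sum_sub_distrib, Finset.sum_sub_distrib, Finset.sum_add_distrib,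
        ← Finset.sum_mul] at key2
      linear_combination key2
    have hS' : 0 ≤ ∑ w, M.mu k w * (y1' + y2' w + x' w + z' w - (D k - ren k w)) * p w :=
      Finset.sum_nonneg fun w _ => mul_nonneg
        (mul_nonneg (hmu0 k w) (by linarith [hcv w])) (hp w).le
    have hS0 : ∑ w, M.mu k w *
        (P.yL1 k + P.yL2 k w + P.xdr k w + P.zbo k w - (D k - ren k w)) * p w = 0 :=
      Finset.sum_eq_zero fun w _ => by
        rcases (hcov k w).lt_or_eq with h | h
        · rw [hcomp k w h]; ring
        · rw [← h]; ring
    have hF : ((∑ w, M.mu k w * p w) - M.lam1 (nodeL k)) * y1'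
          + ∑ w, ((M.mu k w - M.lam2 w (nodeL k)) * y2' w
              + (M.mu k w * x' w - cdr k (x' w)) + (M.mu k w * z' w - cbo k (z' w))
              - M.mu k w * (D k - ren k w)) * p w
        ≤ ((∑ w, M.mu k w * p w) - M.lam1 (nodeL k)) * P.yL1 k
          + ∑ w, ((M.mu k w - M.lam2 w (nodeL k)) * P.yL2 k w
              + (M.mu k w * P.xdr k w - cdr k (P.xdr k w))
              + (M.mu k w * P.zbo k w - cbo k (P.zbo k w))
              - M.mu k w * (D k - ren k w)) * p w := by
      refine add_le_add
        (coeff_step (by linarith [hL1le k]) hy1 (hL1n k)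
          (fun h => by rw [hL1eq k h]; ring)) (Finset.sum_le_sum fun w _ => ?_)
      refine mul_le_mul_of_nonneg_right ?_ (hp w).le
      have t1 : (M.mu k w - M.lam2 w (nodeL k)) * y2' w
          ≤ (M.mu k w - M.lam2 w (nodeL k)) * P.yL2 k w :=
        coeff_step (by linarith [hL2le k w]) (hy2 w) (hL2n k w)
          (fun h => by rw [hL2eq k w h]; ring)
      have t2 := profit_max (hA1.2.2.1 k).1.convexOn (hA1.2.2.1 k).2.2.1 (hxn k w)
        (hdrle k w) (fun h => hdreq k w h) (hx w)
      have t3 := profit_max (hA1.2.2.2 k).1.convexOn (hA1.2.2.2 k).2.2.1 (hzn k w)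
        (hbole k w) (fun h => hboeq k w h) (hz w)
      linarith
    calc -(M.lam1 (nodeL k)) * y1' - (∑ w, M.lam2 w (nodeL k) * y2' w * p w)
          - ∑ w, (cdr k (x' w) + cbo k (z' w)) * p w
        ≤ (-(M.lam1 (nodeL k)) * y1' - (∑ w, M.lam2 w (nodeL k) * y2' w * p w)
          - ∑ w, (cdr k (x' w) + cbo k (z' w)) * p w)
          + ∑ w, M.mu k w * (y1' + y2' w + x' w + z' w - (D k - ren k w)) * p w :=
          le_add_of_nonneg_right hS'
      _ ≤ ((∑ w, M.mu k w * p w) - M.lam1 (nodeL k)) * P.yL1 k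
          + ∑ w, ((M.mu k w - M.lam2 w (nodeL k)) * P.yL2 k w
              + (M.mu k w * P.xdr k w - cdr k (P.xdr k w))
              + (M.mu k w * P.zbo k w - cbo k (P.zbo k w))
              - M.mu k w * (D k - ren k w)) * p w := by
          rw [hid y1' y2' x' z']; exact hF
      _ = -(M.lam1 (nodeL k)) * P.yL1 k - (∑ w, M.lam2 w (nodeL k) * P.yL2 k w * p w)
          - ∑ w, (cdr k (P.xdr k w) + cbo k (P.zbo k w)) * p w := by
          rw [← hid (P.yL1 k) (P.yL2 k) (P.xdr k) (P.zbo k), hS0, add_zero]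
  · -- (c) stage 1 clearing
    have h1 : ∑ i, ((∑ k, if nodeG k = i then P.yG1 k else 0)
        - (∑ k, if nodeL k = i then P.yL1 k else 0)) = 0 := by
      calc ∑ i, ((∑ k, if nodeG k = i then P.yG1 k else 0)
            - (∑ k, if nodeL k = i then P.yL1 k else 0))
          = ∑ i, ∑ j, B i j * (P.th1 i - P.th1 j) :=
            Finset.sum_congr rfl fun i _ => hbal1 i
        _ = 0 := sum_antisymm B hBsymm P.th1
    rw [Finset.sum_sub_distrib] at h1
    have hG : ∑ i, ∑ k, (if nodeG k = i then P.yG1 k else 0) = ∑ k, P.yG1 k := by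
      rw [Finset.sum_comm]; simp
    have hL : ∑ i, ∑ k, (if nodeL k = i then P.yL1 k else 0) = ∑ k, P.yL1 k := by
      rw [Finset.sum_comm]; simp
    rw [hG, hL] at h1
    linarith
  · -- (c) stage 2 clearing
    intro w
    have h1 : ∑ i, ((∑ k, if nodeG k = i then P.yG2 k w else 0)
        - (∑ k, if nodeL k = i then P.yL2 k w else 0)) = 0 := by
      calc ∑ i, ((∑ k, if nodeG k = i then P.yG2 k w else 0)
            - (∑ k, if nodeL k = i then P.yL2 k w else 0))
          = ∑ i, ∑ j, B i j * (P.th2 w i - P.th2 w j - P.th1 i + P.th1 j) :=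
            Finset.sum_congr rfl fun i _ => hbal2 w i
        _ = ∑ i, ∑ j, B i j * ((P.th2 w i - P.th1 i) - (P.th2 w j - P.th1 j)) :=
            Finset.sum_congr rfl fun i _ => Finset.sum_congr rfl fun j _ => by ring
        _ = 0 := sum_antisymm B hBsymm fun i => P.th2 w i - P.th1 i
    rw [Finset.sum_sub_distrib] at h1
    have hG : ∑ i, ∑ k, (if nodeG k = i then P.yG2 k w else 0) = ∑ k, P.yG2 k w := by
      rw [Finset.sum_comm]; simp
    have hL : ∑ i, ∑ k, (if nodeL k = i then P.yL2 k w else 0) = ∑ k, P.yL2 k w := by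
      rw [Finset.sum_comm]; simp
    rw [hG, hL] at h1
    linarith
end

section
/- (Theorem 2(i), first welfare theorem) Let P_{1,i} ∈ ℝ and P_{2,i}(w) ∈ ℝ be nodal prices and let (ȳ^G, ȳ^L, x̄, z̄, θ̄) be a point such that: (a) for every generator (i,k), (ȳ^G_{1,k}, ȳ^G_{2,k}(·)) maximizes the (GEN-P) objective P_{1,i} y_1 − c_{1,k}(y_1) + Σ_w (P_{2,i}(w) y_2(w) − c_{2,k}(y_2(w))) p_w over all nonnegative (y_1, y_2(·)); (b) for every LSE (i,k), (ȳ^L_{1,k}, ȳ^L_{2,k}(·), x̄_k(·), z̄_k(·)) maximizes the (LSE-P) objective −P_{1,i} y_1 − Σ_w P_{2,i}(w) y_2(w) p_w − Σ_w (c_{dr,k}(x(w)) + c_{bo,k}(z(w))) p_w over all nonnegative (y_1, y_2(·), x(·), z(·)) with y_1 + y_2(w) + x(w) + z(w) ≥ D_k − w_k for all w; and (c) (ȳ^G, ȳ^L, θ̄) maximizes the ISO objective Σ_i P_{1,i}(Σ_{k∈L_i} y^L_{1,k} − Σ_{k∈G_i} y^G_{1,k}) + Σ_w Σ_i P_{2,i}(w)(Σ_{k∈L_i}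 y^L_{2,k}(w) − Σ_{k∈G_i} y^G_{2,k}(w)) p_w over all nonnegative generations and consumptions and all angles satisfying the first- and second-stage nodal balance equations and line limits. Then (ȳ^G, ȳ^L, x̄, z̄, θ̄) is an optimal solution of (SPP-P), i.e., the sequential competitive equilibrium supports an efficient sequential allocation. -/
open scoped BigOperators

variable {N G L W : Type} [Fintype N] [Fintype G] [Fintype L] [Fintype W] [DecidableEq N]

private lemma sum_price_ite {N K : Type} [Fintype N] [Fintype K] [DecidableEq N]
    (P : N → ℝ) (f : K → N) (g : K → ℝ) :
    ∑ i, P i * ∑ k, (if f k = i then g k else 0) = ∑ k, P (f k) * g k := by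
  simp only [Finset.mul_sum, mul_ite, mul_zero]
  rw [Finset.sum_comm]
  simp

/-- Theorem 2(i) (first welfare theorem): if at given nodal prices every generator's
allocation is (GEN-P)-optimal, every LSE's allocation is (LSE-P)-optimal, and the
allocation together with the angles maximizes the ISO objective over the ISO feasible
set, then the allocation is an optimal solution of (SPP-P), i.e. the sequential
competitive equilibrium supports an efficient sequential allocation. -/
theorem sequential_competitive_equilibrium_is_efficient
    (nodeG : G → N) (nodeL : L → N) (B fmax : N → N → ℝ)
    (hBsymm : ∀ i j, B i j = B j i)
    (hfsymm : ∀ i j, fmax i j = fmax j i) (hfnonneg : ∀ i j, 0 ≤ fmax i j)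
    (p : W → ℝ) (hp : ∀ w, 0 < p w) (hpsum : ∑ w, p w = 1)
    (c1 c2 : G → ℝ → ℝ) (cdr cbo : L → ℝ → ℝ)
    (hA1 : Assumption1 c1 c2 cdr cbo)
    (D : L → ℝ) (hD : ∀ k, 0 ≤ D k)
    (ren : L → W → ℝ) (hren : ∀ k w, 0 ≤ ren k w)
    (P1 : N → ℝ) (P2 : W → N → ℝ)
    (Pbar : MarketPoint N G L W)
    -- (a) each generator's allocation is (GEN-P)-optimal
    (hgen : ∀ k : G, GenOpt p c1 c2 P1 P2 nodeG k (Pbar.yG1 k) (Pbar.yG2 k))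
    -- (b) each LSE's allocation is (LSE-P)-optimal
    (hlse : ∀ k : L, LSEOpt p cdr cbo P1 P2 nodeL D ren k
        (Pbar.yL1 k) (Pbar.yL2 k) (Pbar.xdr k) (Pbar.zbo k))
    -- (c) the allocation maximizes the ISO objective over the ISO feasible set
    (hisof : ISOFeasible nodeG nodeL B fmax Pbar.yG1 Pbar.yG2 Pbar.yL1 Pbar.yL2
        Pbar.th1 Pbar.th2)
    (hisoopt : ∀ (yG1 : G → ℝ) (yG2 : G → W → ℝ) (yL1 : L → ℝ) (yL2 : L → W → ℝ)
        (th1 : N → ℝ) (th2 : W → N → ℝ),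
        ISOFeasible nodeG nodeL B fmax yG1 yG2 yL1 yL2 th1 th2 →
        ISOObj nodeG nodeL p P1 P2 yG1 yG2 yL1 yL2
          ≤ ISOObj nodeG nodeL p P1 P2 Pbar.yG1 Pbar.yG2 Pbar.yL1 Pbar.yL2) :
    -- conclusion: the allocation is an optimal solution of (SPP-P)
    SPPFeasible nodeG nodeL B fmax D ren Pbar
    ∧ ∀ Q : MarketPoint N G L W, SPPFeasible nodeG nodeL B fmax D ren Q →
        SPPObj p c1 c2 cdr cbo Q ≤ SPPObj p c1 c2 cdr cbo Pbar := by
  classical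
  -- feasibility of Pbar
  obtain ⟨hG1n, hG2n, hL1n, hL2n, hbal1, hbal2, hlim1, hlim2⟩ := hisof
  have hfeas : SPPFeasible nodeG nodeL B fmax D ren Pbar :=
    ⟨hG1n, hG2n, hL1n, hL2n, fun k w => (hlse k).2.2.1 w, fun k w => (hlse k).2.2.2.1 w,
      hbal1, hbal2, hlim1, hlim2, fun k w => (hlse k).2.2.2.2.1 w⟩
  refine ⟨hfeas, fun Q hQ => ?_⟩
  obtain ⟨qG1n, qG2n, qL1n, qL2n, qxn, qzn, qbal1, qbal2, qlim1, qlim2, qcov⟩ := hQ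
  -- decompose the SPP objective
  have key : ∀ R : MarketPoint N G L W,
      SPPObj p c1 c2 cdr cbo R =
        (∑ k, (P1 (nodeG k) * R.yG1 k - c1 k (R.yG1 k)
            + ∑ w, (P2 w (nodeG k) * R.yG2 k w - c2 k (R.yG2 k w)) * p w))
        + (∑ k, (-(P1 (nodeL k)) * R.yL1 k - (∑ w, P2 w (nodeL k) * R.yL2 k w * p w)
            - (∑ w, (cdr k (R.xdr k w) + cbo k (R.zbo k w)) * p w)))
        + ISOObj nodeG nodeL p P1 P2 R.yG1 R.yG2 R.yL1 R.yL2 := by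
    intro R
    have h1 : ∑ i, P1 i * ((∑ k, if nodeL k = i then R.yL1 k else 0)
          - (∑ k, if nodeG k = i then R.yG1 k else 0))
        = (∑ k, P1 (nodeL k) * R.yL1 k) - ∑ k, P1 (nodeG k) * R.yG1 k := by
      simp only [mul_sub, Finset.sum_sub_distrib, sum_price_ite]
    have h2 : ∀ w : W, ∑ i, P2 w i * ((∑ k, if nodeL k = i then R.yL2 k w else 0)
          - (∑ k, if nodeG k = i then R.yG2 k w else 0))
        = (∑ k, P2 w (nodeL k) * R.yL2 k w) - ∑ k, P2 w (nodeG k) * R.yG2 k w := by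
      intro w
      simp only [mul_sub, Finset.sum_sub_distrib, sum_price_ite]
    have hiso_eq : ISOObj nodeG nodeL p P1 P2 R.yG1 R.yG2 R.yL1 R.yL2
        = ((∑ k, P1 (nodeL k) * R.yL1 k) - ∑ k, P1 (nodeG k) * R.yG1 k)
          + (((∑ k, ∑ w, P2 w (nodeL k) * R.yL2 k w * p w))
            - ∑ k, ∑ w, P2 w (nodeG k) * R.yG2 k w * p w) := by
      rw [ISOObj, h1]
      congr 1
      calc ∑ w, (∑ i, P2 w i * ((∑ k, if nodeL k = i then R.yL2 k w else 0)
              - (∑ k, if nodeG k = i then R.yG2 k w else 0))) * p w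
          = ∑ w, ((∑ k, P2 w (nodeL k) * R.yL2 k w * p w)
              - ∑ k, P2 w (nodeG k) * R.yG2 k w * p w) := by
            refine Finset.sum_congr rfl fun w _ => ?_
            rw [h2 w, sub_mul, Finset.sum_mul, Finset.sum_mul]
        _ = (∑ w, ∑ k, P2 w (nodeL k) * R.yL2 k w * p w)
              - ∑ w, ∑ k, P2 w (nodeG k) * R.yG2 k w * p w := by
            rw [Finset.sum_sub_distrib]
        _ = _ := by rw [Finset.sum_comm, Finset.sum_comm
              (f := fun w k => P2 w (nodeG k) * R.yG2 k w * p w)]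
    rw [hiso_eq, SPPObj]
    simp only [sub_mul, Finset.sum_sub_distrib, Finset.sum_add_distrib, neg_mul,
      Finset.sum_neg_distrib]
    ring
  rw [key Q, key Pbar]
  have hg : (∑ k, (P1 (nodeG k) * Q.yG1 k - c1 k (Q.yG1 k)
        + ∑ w, (P2 w (nodeG k) * Q.yG2 k w - c2 k (Q.yG2 k w)) * p w))
      ≤ ∑ k, (P1 (nodeG k) * Pbar.yG1 k - c1 k (Pbar.yG1 k)
        + ∑ w, (P2 w (nodeG k) * Pbar.yG2 k w - c2 k (Pbar.yG2 k w)) * p w) :=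
    Finset.sum_le_sum fun k _ =>
      (hgen k).2.2 (Q.yG1 k) (Q.yG2 k) (qG1n k) (qG2n k)
  have hl : (∑ k, (-(P1 (nodeL k)) * Q.yL1 k - (∑ w, P2 w (nodeL k) * Q.yL2 k w * p w)
        - (∑ w, (cdr k (Q.xdr k w) + cbo k (Q.zbo k w)) * p w)))
      ≤ ∑ k, (-(P1 (nodeL k)) * Pbar.yL1 k - (∑ w, P2 w (nodeL k) * Pbar.yL2 k w * p w)
        - (∑ w, (cdr k (Pbar.xdr k w) + cbo k (Pbar.zbo k w)) * p w)) :=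
    Finset.sum_le_sum fun k _ =>
      (hlse k).2.2.2.2.2 (Q.yL1 k) (Q.yL2 k) (Q.xdr k) (Q.zbo k)
        (qL1n k) (qL2n k) (qxn k) (qzn k) (qcov k)
  have hi : ISOObj nodeG nodeL p P1 P2 Q.yG1 Q.yG2 Q.yL1 Q.yL2
      ≤ ISOObj nodeG nodeL p P1 P2 Pbar.yG1 Pbar.yG2 Pbar.yL1 Pbar.yL2 :=
    hisoopt Q.yG1 Q.yG2 Q.yL1 Q.yL2 Q.th1 Q.th2
      ⟨qG1n, qG2n, qL1n, qL2n, qbal1, qbal2, qlim1, qlim2⟩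
  linarith
end

section
/- (Proposition 1, existence of an efficient bid profile) Suppose (ŷ^G, ŷ^L, x̂, ẑ, θ̂) is a KKT point of (SPP-P) with multipliers (λ, μ, γ). Define the bid profile in which every generator and every LSE located at node i bids b^G_{1,k} = b^L_{1,k} = λ_{1,i} for the first stage and b^G_{2,k}(w) = b^L_{2,k}(w) = λ_{2,i}(w) for each second-stage scenario w. Then (ŷ^G, ŷ^L, θ̂) is an optimal solution of the linear program (DED) under this bid profile; in particular, (DED) has a solution that is also a solution of (SPP-P). -/
open scoped BigOperators

variable {N G L W : Type} [Fintype N] [Fintype G] [Fintype L] [Fintype W] [DecidableEq N]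

/-- Objective of the bid-based dynamic economic dispatch linear program (DED). -/
noncomputable def DEDObj (p : W → ℝ)
    (bG1 : G → ℝ) (bG2 : G → W → ℝ) (bL1 : L → ℝ) (bL2 : L → W → ℝ)
    (yG1 : G → ℝ) (yG2 : G → W → ℝ) (yL1 : L → ℝ) (yL2 : L → W → ℝ) : ℝ :=
  (∑ k, bL1 k * yL1 k) + (∑ w, (∑ k, bL2 k w * yL2 k w) * p w)
    - ∑ k, (bG1 k * yG1 k + ∑ w, bG2 k w * yG2 k w * p w)


section EfficientBidHelpers

set_option linter.unusedSectionVars false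

lemma tangent_le {f : ℝ → ℝ} (hfc : ConvexOn ℝ (Set.Ici (0:ℝ)) f)
    (hfd : Differentiable ℝ f) {a b : ℝ} (ha : 0 ≤ a) (hb : 0 ≤ b) :
    f a + deriv f a * (b - a) ≤ f b := by
  rcases lt_trichotomy a b with h | h | h
  · have h2 : deriv f a ≤ (f b - f a) / (b - a) := by
      simpa [slope_def_field] using hfc.deriv_le_slope ha hb h (hfd a)
    have h3 : deriv f a * (b - a) ≤ f b - f a := (le_div_iff₀ (by linarith)).mp h2
    linarith
  · simp [h]
  · have h2 : (f a - f b) / (a - b) ≤ deriv f a := by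
      simpa [slope_def_field] using hfc.slope_le_deriv hb ha h (hfd a)
    have h3 : f a - f b ≤ deriv f a * (a - b) := (div_le_iff₀ (by linarith)).mp h2
    nlinarith

lemma sign_mul_le {lam d a b : ℝ} (ha : 0 ≤ a) (hb : 0 ≤ b) (hld : lam ≤ d)
    (heq : 0 < a → d = lam) : lam * (b - a) ≤ d * (b - a) := by
  rcases ha.eq_or_lt with h | h
  · nlinarith
  · rw [heq h]

lemma profit_step {lam yo yn : ℝ} {f : ℝ → ℝ}
    (hconv : ConvexOn ℝ (Set.Ici (0:ℝ)) f) (hdiff : Differentiable ℝ f)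
    (hyo : 0 ≤ yo) (hyn : 0 ≤ yn)
    (hle : lam ≤ deriv f yo) (heq : 0 < yo → deriv f yo = lam) :
    lam * yn - f yn ≤ lam * yo - f yo := by
  have ht := tangent_le hconv hdiff hyo hyn
  have hs := sign_mul_le hyo hyn hle heq
  nlinarith

lemma sum_swap_B {B : N → N → ℝ} (hB : ∀ i j, B i j = B j i) (f g : N → ℝ) :
    ∑ i, ∑ j, f i * (B i j * (g i - g j)) = ∑ i, ∑ j, g i * (B i j * (f i - f j)) := by
  have h1 : ∑ i, ∑ j, f i * (B i j * g j) = ∑ i, ∑ j, g i * (B i j * f j) := by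
    rw [Finset.sum_comm]
    exact Finset.sum_congr rfl fun j _ => Finset.sum_congr rfl fun i _ => by rw [hB]; ring
  have h2 : ∑ i, ∑ j, f i * (B i j * g i) = ∑ i, ∑ j, g i * (B i j * f i) :=
    Finset.sum_congr rfl fun i _ => Finset.sum_congr rfl fun j _ => by ring
  simp only [mul_sub, Finset.sum_sub_distrib]
  rw [h1, h2]

lemma sum_swap_gamma {B : N → N → ℝ} (hB : ∀ i j, B i j = B j i) (γ : N → N → ℝ) (θ : N → ℝ) :
    ∑ i, ∑ j, θ i * (B i j * (γ i j - γ j i)) = ∑ i, ∑ j, γ i j * (B i j * (θ i - θ j)) := by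
  have h1 : ∑ i, ∑ j, θ i * (B i j * γ j i) = ∑ i, ∑ j, γ i j * (B i j * θ j) := by
    rw [Finset.sum_comm]
    exact Finset.sum_congr rfl fun j _ => Finset.sum_congr rfl fun i _ => by rw [hB]; ring
  have h2 : ∑ i, ∑ j, θ i * (B i j * γ i j) = ∑ i, ∑ j, γ i j * (B i j * θ i) :=
    Finset.sum_congr rfl fun i _ => Finset.sum_congr rfl fun j _ => by ring
  simp only [mul_sub, Finset.sum_sub_distrib]
  rw [h1, h2]

lemma stationarity_value {B : N → N → ℝ} (hB : ∀ i j, B i j = B j i)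
    (d : N → ℝ) (γ : N → N → ℝ)
    (h : ∀ i, ∑ j, B i j * (d i - d j + (γ i j - γ j i)) = 0) (θ : N → ℝ) :
    ∑ i, d i * (∑ j, B i j * (θ i - θ j))
      = - ∑ i, ∑ j, γ i j * (B i j * (θ i - θ j)) := by
  have h0 : ∑ i, θ i * ∑ j, B i j * (d i - d j + (γ i j - γ j i)) = 0 := by
    simp [h]
  have expand : ∑ i, θ i * ∑ j, B i j * (d i - d j + (γ i j - γ j i))
      = (∑ i, ∑ j, θ i * (B i j * (d i - d j))) + ∑ i, ∑ j, θ i * (B i j * (γ i j - γ j i)) := by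
    rw [← Finset.sum_add_distrib]
    refine Finset.sum_congr rfl fun i _ => ?_
    rw [Finset.mul_sum, ← Finset.sum_add_distrib]
    exact Finset.sum_congr rfl fun j _ => by ring
  rw [expand, sum_swap_B hB θ d, sum_swap_gamma hB γ θ] at h0
  have h1 : ∑ i, d i * (∑ j, B i j * (θ i - θ j)) = ∑ i, ∑ j, d i * (B i j * (θ i - θ j)) :=
    Finset.sum_congr rfl fun i _ => Finset.mul_sum _ _ _
  rw [h1]
  linarith

lemma sum_node_group {K : Type} [Fintype K] (node : K → N) (f : N → ℝ) (y : K → ℝ) :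
    ∑ k, f (node k) * y k = ∑ i, f i * ∑ k, (if node k = i then y k else 0) := by
  simp only [Finset.mul_sum, mul_ite, mul_zero]
  rw [Finset.sum_comm]
  exact Finset.sum_congr rfl fun k _ => by simp

lemma sum_comm_mul' {K : Type} [Fintype K] (a : K → W → ℝ) (p : W → ℝ) :
    ∑ w, (∑ k, a k w) * p w = ∑ k, ∑ w, a k w * p w := by
  simp only [Finset.sum_mul]; exact Finset.sum_comm

lemma sum_comm_mul'' (a : W → N → ℝ) (p : W → ℝ) (F : N → ℝ) :
    ∑ i, (∑ w, a w i * p w) * F i = ∑ w, (∑ i, a w i * F i) * p w := by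
  simp only [Finset.sum_mul]
  rw [Finset.sum_comm]
  exact Finset.sum_congr rfl fun i _ => Finset.sum_congr rfl fun w _ => by ring

/-- The value of (DED) under the λ-bid profile at any point satisfying the nodal balance
equations equals the congestion-rent expression determined by the line multipliers. -/
lemma ded_value (nodeG : G → N) (nodeL : L → N) (B : N → N → ℝ)
    (hB : ∀ i j, B i j = B j i) (p : W → ℝ)
    (lam1 : N → ℝ) (lam2 : W → N → ℝ) (gam1 : N → N → ℝ) (gam2 : W → N → N → ℝ)
    (hst1 : ∀ i, ∑ j, B i j * (lam1 i - lam1 j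
        - (∑ w, (lam2 w i - lam2 w j) * p w) + gam1 i j - gam1 j i) = 0)
    (hst2 : ∀ (w : W) (i : N),
        ∑ j, B i j * (lam2 w i - lam2 w j + gam2 w i j - gam2 w j i) = 0)
    (yG1 : G → ℝ) (yG2 : G → W → ℝ) (yL1 : L → ℝ) (yL2 : L → W → ℝ)
    (th1 : N → ℝ) (th2 : W → N → ℝ)
    (hb1 : ∀ i, (∑ k, if nodeG k = i then yG1 k else 0)
        - (∑ k, if nodeL k = i then yL1 k else 0) = ∑ j, B i j * (th1 i - th1 j))
    (hb2 : ∀ (w : W) (i : N), (∑ k, if nodeG k = i then yG2 k w else 0)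
        - (∑ k, if nodeL k = i then yL2 k w else 0)
        = ∑ j, B i j * (th2 w i - th2 w j - th1 i + th1 j)) :
    DEDObj p (fun k => lam1 (nodeG k)) (fun k w => lam2 w (nodeG k))
        (fun k => lam1 (nodeL k)) (fun k w => lam2 w (nodeL k)) yG1 yG2 yL1 yL2
      = (∑ i, ∑ j, gam1 i j * (B i j * (th1 i - th1 j)))
        + ∑ w, (∑ i, ∑ j, gam2 w i j * (B i j * (th2 w i - th2 w j))) * p w := by
  have hsub : ∀ i j, ∑ w, (lam2 w i - lam2 w j) * p w
      = (∑ w, lam2 w i * p w) - ∑ w, lam2 w j * p w := by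
    intro i j
    rw [← Finset.sum_sub_distrib]
    exact Finset.sum_congr rfl fun w _ => by ring
  have hst1' : ∀ i, ∑ j, B i j * ((lam1 i - ∑ w, lam2 w i * p w)
      - (lam1 j - ∑ w, lam2 w j * p w) + (gam1 i j - gam1 j i)) = 0 := by
    intro i
    calc ∑ j, B i j * ((lam1 i - ∑ w, lam2 w i * p w)
          - (lam1 j - ∑ w, lam2 w j * p w) + (gam1 i j - gam1 j i))
        = ∑ j, B i j * (lam1 i - lam1 j
            - (∑ w, (lam2 w i - lam2 w j) * p w) + gam1 i j - gam1 j i) :=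
          Finset.sum_congr rfl fun j _ => by rw [hsub i j]; ring
      _ = 0 := hst1 i
  have hst2' : ∀ (w : W) (i : N),
      ∑ j, B i j * (lam2 w i - lam2 w j + (gam2 w i j - gam2 w j i)) = 0 := by
    intro w i
    calc ∑ j, B i j * (lam2 w i - lam2 w j + (gam2 w i j - gam2 w j i))
        = ∑ j, B i j * (lam2 w i - lam2 w j + gam2 w i j - gam2 w j i) :=
          Finset.sum_congr rfl fun j _ => by ring
      _ = 0 := hst2 w i
  have k1 := stationarity_value hB (fun i => lam1 i - ∑ w, lam2 w i * p w) gam1 hst1' th1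
  have k2 : ∀ w, ∑ i, lam2 w i * (∑ j, B i j * (th2 w i - th2 w j))
      = - ∑ i, ∑ j, gam2 w i j * (B i j * (th2 w i - th2 w j)) :=
    fun w => stationarity_value hB (lam2 w) (gam2 w) (hst2' w) (th2 w)
  have E1 : DEDObj p (fun k => lam1 (nodeG k)) (fun k w => lam2 w (nodeG k))
        (fun k => lam1 (nodeL k)) (fun k w => lam2 w (nodeL k)) yG1 yG2 yL1 yL2
      = (∑ i, lam1 i * ∑ k, (if nodeL k = i then yL1 k else 0))
        + (∑ w, (∑ i, lam2 w i * ∑ k, (if nodeL k = i then yL2 k w else 0)) * p w)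
        - ((∑ i, lam1 i * ∑ k, (if nodeG k = i then yG1 k else 0))
          + ∑ w, (∑ i, lam2 w i * ∑ k, (if nodeG k = i then yG2 k w else 0)) * p w) := by
    simp only [DEDObj]
    rw [sum_node_group nodeL lam1 yL1]
    congr 1
    · congr 1
      exact Finset.sum_congr rfl fun w _ => by
        rw [sum_node_group nodeL (lam2 w) (fun k => yL2 k w)]
    · rw [Finset.sum_add_distrib, sum_node_group nodeG lam1 yG1]
      congr 1
      calc ∑ k, ∑ w, lam2 w (nodeG k) * yG2 k w * p w
          = ∑ w, (∑ k, lam2 w (nodeG k) * yG2 k w) * p w :=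
            (sum_comm_mul' (fun k w => lam2 w (nodeG k) * yG2 k w) p).symm
        _ = ∑ w, (∑ i, lam2 w i * ∑ k, (if nodeG k = i then yG2 k w else 0)) * p w :=
            Finset.sum_congr rfl fun w _ => by
              rw [sum_node_group nodeG (lam2 w) (fun k => yG2 k w)]
  have g1 : (∑ i, lam1 i * ∑ k, (if nodeL k = i then yL1 k else 0))
      - (∑ i, lam1 i * ∑ k, (if nodeG k = i then yG1 k else 0))
      = - ∑ i, lam1 i * (∑ j, B i j * (th1 i - th1 j)) := by
    rw [← Finset.sum_sub_distrib, ← Finset.sum_neg_distrib]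
    exact Finset.sum_congr rfl fun i _ => by linear_combination (-(lam1 i)) * hb1 i
  have hb2' : ∀ (w : W) (i : N), ∑ j, B i j * (th2 w i - th2 w j - th1 i + th1 j)
      = (∑ j, B i j * (th2 w i - th2 w j)) - ∑ j, B i j * (th1 i - th1 j) := by
    intro w i
    rw [← Finset.sum_sub_distrib]
    exact Finset.sum_congr rfl fun j _ => by ring
  have g2 : ∀ w, (∑ i, lam2 w i * ∑ k, (if nodeL k = i then yL2 k w else 0))
      - (∑ i, lam2 w i * ∑ k, (if nodeG k = i then yG2 k w else 0))
      = (∑ i, lam2 w i * (∑ j, B i j * (th1 i - th1 j)))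
        - ∑ i, lam2 w i * (∑ j, B i j * (th2 w i - th2 w j)) := by
    intro w
    rw [← Finset.sum_sub_distrib, ← Finset.sum_sub_distrib]
    refine Finset.sum_congr rfl fun i _ => ?_
    have h := hb2 w i
    rw [hb2' w i] at h
    linear_combination (-(lam2 w i)) * h
  rw [E1]
  have split2 : ∀ w, ((∑ i, lam2 w i * ∑ k, (if nodeL k = i then yL2 k w else 0)) * p w
        - (∑ i, lam2 w i * ∑ k, (if nodeG k = i then yG2 k w else 0)) * p w)
      = (∑ i, lam2 w i * (∑ j, B i j * (th1 i - th1 j))) * p w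
        + (∑ i, ∑ j, gam2 w i j * (B i j * (th2 w i - th2 w j))) * p w := by
    intro w
    have h := g2 w
    have h2 := k2 w
    linear_combination p w * h - p w * h2
  calc (∑ i, lam1 i * ∑ k, (if nodeL k = i then yL1 k else 0))
        + (∑ w, (∑ i, lam2 w i * ∑ k, (if nodeL k = i then yL2 k w else 0)) * p w)
        - ((∑ i, lam1 i * ∑ k, (if nodeG k = i then yG1 k else 0))
          + ∑ w, (∑ i, lam2 w i * ∑ k, (if nodeG k = i then yG2 k w else 0)) * p w)
      = ((∑ i, lam1 i * ∑ k, (if nodeL k = i then yL1 k else 0))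
          - (∑ i, lam1 i * ∑ k, (if nodeG k = i then yG1 k else 0)))
        + ∑ w, ((∑ i, lam2 w i * ∑ k, (if nodeL k = i then yL2 k w else 0)) * p w
          - (∑ i, lam2 w i * ∑ k, (if nodeG k = i then yG2 k w else 0)) * p w) := by
        rw [Finset.sum_sub_distrib]; ring
    _ = (- ∑ i, lam1 i * (∑ j, B i j * (th1 i - th1 j)))
        + ∑ w, ((∑ i, lam2 w i * (∑ j, B i j * (th1 i - th1 j))) * p w
          + (∑ i, ∑ j, gam2 w i j * (B i j * (th2 w i - th2 w j))) * p w) := by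
        rw [g1, Finset.sum_congr rfl fun w _ => split2 w]
    _ = (- ∑ i, lam1 i * (∑ j, B i j * (th1 i - th1 j)))
        + (∑ i, (∑ w, lam2 w i * p w) * (∑ j, B i j * (th1 i - th1 j)))
        + ∑ w, (∑ i, ∑ j, gam2 w i j * (B i j * (th2 w i - th2 w j))) * p w := by
        rw [Finset.sum_add_distrib,
          sum_comm_mul'' lam2 p (fun i => ∑ j, B i j * (th1 i - th1 j))]
        ring
    _ = (∑ i, ∑ j, gam1 i j * (B i j * (th1 i - th1 j)))
        + ∑ w, (∑ i, ∑ j, gam2 w i j * (B i j * (th2 w i - th2 w j))) * p w := by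
        have hdd : ∑ i, (lam1 i - ∑ w, lam2 w i * p w) * (∑ j, B i j * (th1 i - th1 j))
            = (∑ i, lam1 i * (∑ j, B i j * (th1 i - th1 j)))
              - ∑ i, (∑ w, lam2 w i * p w) * (∑ j, B i j * (th1 i - th1 j)) := by
          rw [← Finset.sum_sub_distrib]
          exact Finset.sum_congr rfl fun i _ => by ring
        rw [hdd] at k1
        linarith

/-- Decomposition of welfare minus the λ-bid (DED) objective into per-agent surpluses. -/
lemma spp_ded_split (nodeG : G → N) (nodeL : L → N) (p : W → ℝ)
    (c1 c2 : G → ℝ → ℝ) (cdr cbo : L → ℝ → ℝ) (lam1 : N → ℝ) (lam2 : W → N → ℝ)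
    (X : MarketPoint N G L W) :
    SPPObj p c1 c2 cdr cbo X
      - DEDObj p (fun k => lam1 (nodeG k)) (fun k w => lam2 w (nodeG k))
          (fun k => lam1 (nodeL k)) (fun k w => lam2 w (nodeL k)) X.yG1 X.yG2 X.yL1 X.yL2
    = (∑ k, (lam1 (nodeG k) * X.yG1 k - c1 k (X.yG1 k)
        + ∑ w, (lam2 w (nodeG k) * X.yG2 k w - c2 k (X.yG2 k w)) * p w))
      + ∑ k, (-(lam1 (nodeL k) * X.yL1 k) - (∑ w, lam2 w (nodeL k) * X.yL2 k w * p w)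
        - ∑ w, (cdr k (X.xdr k w) + cbo k (X.zbo k w)) * p w) := by
  simp only [SPPObj, DEDObj]
  rw [sum_comm_mul' (fun k w => lam2 w (nodeL k) * X.yL2 k w) p]
  simp only [sub_mul, Finset.sum_add_distrib, Finset.sum_sub_distrib, Finset.sum_neg_distrib]
  ring

end EfficientBidHelpers
/-- Proposition 1 (existence of an efficient bid profile): if every generator and every
LSE at node i bids the (SPP-P) balance multipliers λ₁,ᵢ and λ₂,ᵢ(w), then the KKT
allocation (ŷᴳ, ŷᴸ, θ̂) is an optimal solution of (DED); in particular, since the KKT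
point is optimal for (SPP-P), (DED) has a solution that is also a solution of (SPP-P). -/
theorem efficient_bid_profile_exists
    (nodeG : G → N) (nodeL : L → N) (B fmax : N → N → ℝ)
    (hBsymm : ∀ i j, B i j = B j i)
    (hfsymm : ∀ i j, fmax i j = fmax j i) (hfnonneg : ∀ i j, 0 ≤ fmax i j)
    (p : W → ℝ) (hp : ∀ w, 0 < p w) (hpsum : ∑ w, p w = 1)
    (c1 c2 : G → ℝ → ℝ) (cdr cbo : L → ℝ → ℝ)
    (hA1 : Assumption1 c1 c2 cdr cbo)
    (D : L → ℝ) (hD : ∀ k, 0 ≤ D k)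
    (ren : L → W → ℝ) (hren : ∀ k w, 0 ≤ ren k w)
    (P : MarketPoint N G L W) (M : SPPMultipliers N L W)
    (hKKT : SPPKKT nodeG nodeL B fmax p c1 c2 cdr cbo D ren P M) :
    -- (ŷᴳ, ŷᴸ, θ̂) is optimal for (DED) under the bid profile
    -- bᴳ₁ₖ = bᴸ₁ₖ = λ₁,ᵢ, bᴳ₂ₖ(w) = bᴸ₂ₖ(w) = λ₂,ᵢ(w)
    (ISOFeasible nodeG nodeL B fmax P.yG1 P.yG2 P.yL1 P.yL2 P.th1 P.th2
      ∧ ∀ (yG1 : G → ℝ) (yG2 : G → W → ℝ) (yL1 : L → ℝ) (yL2 : L → W → ℝ)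
          (th1 : N → ℝ) (th2 : W → N → ℝ),
          ISOFeasible nodeG nodeL B fmax yG1 yG2 yL1 yL2 th1 th2 →
          DEDObj p (fun k => M.lam1 (nodeG k)) (fun k w => M.lam2 w (nodeG k))
              (fun k => M.lam1 (nodeL k)) (fun k w => M.lam2 w (nodeL k))
              yG1 yG2 yL1 yL2
            ≤ DEDObj p (fun k => M.lam1 (nodeG k)) (fun k w => M.lam2 w (nodeG k))
              (fun k => M.lam1 (nodeL k)) (fun k w => M.lam2 w (nodeL k))
              P.yG1 P.yG2 P.yL1 P.yL2)
    -- and this (DED) solution is also a solution of (SPP-P)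
    ∧ (SPPFeasible nodeG nodeL B fmax D ren P
        ∧ ∀ Q : MarketPoint N G L W, SPPFeasible nodeG nodeL B fmax D ren Q →
            SPPObj p c1 c2 cdr cbo Q ≤ SPPObj p c1 c2 cdr cbo P) := by

  obtain ⟨hFeas, hmu0, hg1nn, hg2nn, hG1le, hG1eq, hG2le, hG2eq, hL1le, hL1eq, hL2le, hL2eq,
    hdrle, hdreq, hbole, hboeq, hslack, hst1, hst2, hcc1, hcc2⟩ := hKKT
  obtain ⟨hyG1, hyG2, hyL1, hyL2, hx, hz, hbal1, hbal2, hlim1, hlim2, hcov⟩ := hFeas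
  -- congestion-rent bounds
  have hbound1 : ∀ (th1 : N → ℝ), (∀ i j, B i j * (th1 i - th1 j) ≤ fmax i j) →
      (∑ i, ∑ j, M.gam1 i j * (B i j * (th1 i - th1 j))) ≤ ∑ i, ∑ j, M.gam1 i j * fmax i j :=
    fun th1 hlim => Finset.sum_le_sum fun i _ => Finset.sum_le_sum fun j _ =>
      mul_le_mul_of_nonneg_left (hlim i j) (hg1nn i j)
  have heq1 : (∑ i, ∑ j, M.gam1 i j * (B i j * (P.th1 i - P.th1 j)))
      = ∑ i, ∑ j, M.gam1 i j * fmax i j :=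
    Finset.sum_congr rfl fun i _ => Finset.sum_congr rfl fun j _ => by
      linear_combination hcc1 i j
  have hbound2 : ∀ (w : W) (th2 : N → ℝ), (∀ i j, B i j * (th2 i - th2 j) ≤ fmax i j) →
      (∑ i, ∑ j, M.gam2 w i j * (B i j * (th2 i - th2 j)))
        ≤ ∑ i, ∑ j, M.gam2 w i j * fmax i j :=
    fun w th2 hlim => Finset.sum_le_sum fun i _ => Finset.sum_le_sum fun j _ =>
      mul_le_mul_of_nonneg_left (hlim i j) (hg2nn w i j)
  have heq2 : ∀ w, (∑ i, ∑ j, M.gam2 w i j * (B i j * (P.th2 w i - P.th2 w j)))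
      = ∑ i, ∑ j, M.gam2 w i j * fmax i j :=
    fun w => Finset.sum_congr rfl fun i _ => Finset.sum_congr rfl fun j _ => by
      linear_combination hcc2 w i j
  -- optimality for (DED)
  have hDEDopt : ∀ (yG1 : G → ℝ) (yG2 : G → W → ℝ) (yL1 : L → ℝ) (yL2 : L → W → ℝ)
      (th1 : N → ℝ) (th2 : W → N → ℝ),
      ISOFeasible nodeG nodeL B fmax yG1 yG2 yL1 yL2 th1 th2 →
      DEDObj p (fun k => M.lam1 (nodeG k)) (fun k w => M.lam2 w (nodeG k))
          (fun k => M.lam1 (nodeL k)) (fun k w => M.lam2 w (nodeL k)) yG1 yG2 yL1 yL2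
        ≤ DEDObj p (fun k => M.lam1 (nodeG k)) (fun k w => M.lam2 w (nodeG k))
          (fun k => M.lam1 (nodeL k)) (fun k w => M.lam2 w (nodeL k))
          P.yG1 P.yG2 P.yL1 P.yL2 := by
    intro yG1 yG2 yL1 yL2 th1 th2 hfe
    obtain ⟨-, -, -, -, hb1, hb2, hl1, hl2⟩ := hfe
    rw [ded_value nodeG nodeL B hBsymm p M.lam1 M.lam2 M.gam1 M.gam2 hst1 hst2
        yG1 yG2 yL1 yL2 th1 th2 hb1 hb2,
      ded_value nodeG nodeL B hBsymm p M.lam1 M.lam2 M.gam1 M.gam2 hst1 hst2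
        P.yG1 P.yG2 P.yL1 P.yL2 P.th1 P.th2 hbal1 hbal2]
    have h1 := hbound1 th1 hl1
    have h2 : ∑ w, (∑ i, ∑ j, M.gam2 w i j * (B i j * (th2 w i - th2 w j))) * p w
        ≤ ∑ w, (∑ i, ∑ j, M.gam2 w i j * (B i j * (P.th2 w i - P.th2 w j))) * p w := by
      refine Finset.sum_le_sum fun w _ => mul_le_mul_of_nonneg_right ?_ (hp w).le
      rw [heq2 w]
      exact hbound2 w (th2 w) (hl2 w)
    linarith [heq1, h1, h2]
  -- optimality for (SPP-P)
  have hSPPopt : ∀ Q : MarketPoint N G L W, SPPFeasible nodeG nodeL B fmax D ren Q →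
      SPPObj p c1 c2 cdr cbo Q ≤ SPPObj p c1 c2 cdr cbo P := by
    intro Q hQ
    obtain ⟨hQyG1, hQyG2, hQyL1, hQyL2, hQx, hQz, hQb1, hQb2, hQl1, hQl2, hQcov⟩ := hQ
    have hDED := hDEDopt Q.yG1 Q.yG2 Q.yL1 Q.yL2 Q.th1 Q.th2
      ⟨hQyG1, hQyG2, hQyL1, hQyL2, hQb1, hQb2, hQl1, hQl2⟩
    have hsplitQ := spp_ded_split nodeG nodeL p c1 c2 cdr cbo M.lam1 M.lam2 Q
    have hsplitP := spp_ded_split nodeG nodeL p c1 c2 cdr cbo M.lam1 M.lam2 P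
    have hgen : ∀ k : G, M.lam1 (nodeG k) * Q.yG1 k - c1 k (Q.yG1 k)
          + ∑ w, (M.lam2 w (nodeG k) * Q.yG2 k w - c2 k (Q.yG2 k w)) * p w
        ≤ M.lam1 (nodeG k) * P.yG1 k - c1 k (P.yG1 k)
          + ∑ w, (M.lam2 w (nodeG k) * P.yG2 k w - c2 k (P.yG2 k w)) * p w := by
      intro k
      obtain ⟨hc1conv, -, hc1diff, -⟩ := hA1.1 k
      obtain ⟨hc2conv, -, hc2diff, -⟩ := hA1.2.1 k
      have h1 := profit_step hc1conv.convexOn hc1diff (hyG1 k) (hQyG1 k) (hG1le k) (hG1eq k)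
      have h3 : ∑ w, (M.lam2 w (nodeG k) * Q.yG2 k w - c2 k (Q.yG2 k w)) * p w
          ≤ ∑ w, (M.lam2 w (nodeG k) * P.yG2 k w - c2 k (P.yG2 k w)) * p w :=
        Finset.sum_le_sum fun w _ => mul_le_mul_of_nonneg_right
          (profit_step hc2conv.convexOn hc2diff (hyG2 k w) (hQyG2 k w) (hG2le k w) (hG2eq k w))
          (hp w).le
      linarith
    have hlse : ∀ k : L,
        -(M.lam1 (nodeL k) * Q.yL1 k) - (∑ w, M.lam2 w (nodeL k) * Q.yL2 k w * p w)
          - ∑ w, (cdr k (Q.xdr k w) + cbo k (Q.zbo k w)) * p w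
        ≤ -(M.lam1 (nodeL k) * P.yL1 k) - (∑ w, M.lam2 w (nodeL k) * P.yL2 k w * p w)
          - ∑ w, (cdr k (P.xdr k w) + cbo k (P.zbo k w)) * p w := by
      intro k
      obtain ⟨hdrconv, -, hdrdiff, -⟩ := hA1.2.2.1 k
      obtain ⟨hboconv, -, hbodiff, -⟩ := hA1.2.2.2 k
      have hw : ∀ w, M.lam2 w (nodeL k) * P.yL2 k w * p w
            + (cdr k (P.xdr k w) + cbo k (P.zbo k w)) * p w
            + M.mu k w * p w * (P.yL1 k - Q.yL1 k)
          ≤ M.lam2 w (nodeL k) * Q.yL2 k w * p w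
            + (cdr k (Q.xdr k w) + cbo k (Q.zbo k w)) * p w := by
        intro w
        have hxt := tangent_le hdrconv.convexOn hdrdiff (hx k w) (hQx k w)
        have hxs := sign_mul_le (hx k w) (hQx k w) (hdrle k w) (hdreq k w)
        have hzt := tangent_le hboconv.convexOn hbodiff (hz k w) (hQz k w)
        have hzs := sign_mul_le (hz k w) (hQz k w) (hbole k w) (hboeq k w)
        have hy2s := sign_mul_le (hyL2 k w) (hQyL2 k w) (hL2le k w) (hL2eq k w)
        have hcompP : M.mu k w * (P.yL1 k + P.yL2 k w + P.xdr k w + P.zbo k w)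
            = M.mu k w * (D k - ren k w) := by
          rcases (hcov k w).lt_or_eq with hlt | heqq
          · rw [hslack k w hlt]; ring
          · rw [← heqq]
        have hcov3 : M.mu k w * (P.yL1 k + P.yL2 k w + P.xdr k w + P.zbo k w)
            ≤ M.mu k w * (Q.yL1 k + Q.yL2 k w + Q.xdr k w + Q.zbo k w) := by
          rw [hcompP]
          exact mul_le_mul_of_nonneg_left (hQcov k w) (hmu0 k w)
        have hsc : M.lam2 w (nodeL k) * P.yL2 k w + (cdr k (P.xdr k w) + cbo k (P.zbo k w))
              + M.mu k w * (P.yL1 k - Q.yL1 k)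
            ≤ M.lam2 w (nodeL k) * Q.yL2 k w + (cdr k (Q.xdr k w) + cbo k (Q.zbo k w)) := by
          nlinarith [hxt, hxs, hzt, hzs, hy2s, hcov3]
        have hmul := mul_le_mul_of_nonneg_right hsc (hp w).le
        nlinarith [hmul]
      have hsum := Finset.sum_le_sum fun w (_ : w ∈ Finset.univ) => hw w
      simp only [Finset.sum_add_distrib] at hsum
      rw [← Finset.sum_mul] at hsum
      have hfin := sign_mul_le (hyL1 k) (hQyL1 k) (hL1le k) (hL1eq k)
      nlinarith [hsum, hfin]
    have hG := Finset.sum_le_sum fun k (_ : k ∈ Finset.univ) => hgen k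
    have hL := Finset.sum_le_sum fun k (_ : k ∈ Finset.univ) => hlse k
    linarith [hsplitQ, hsplitP, hDED, hG, hL]
  exact ⟨⟨⟨hyG1, hyG2, hyL1, hyL2, hbal1, hbal2, hlim1, hlim2⟩, hDEDopt⟩,
    ⟨hyG1, hyG2, hyL1, hyL2, hx, hz, hbal1, hbal2, hlim1, hlim2, hcov⟩, hSPPopt⟩
end

section
/- (Uniqueness of the efficient dispatch, demand-response and blackout quantities) Under Assumption 1 (all cost functions strictly convex, increasing, differentiable and nonnegative) and with p_w > 0 for all scenarios w, any two optimal solutions of (SPP-P) agree in all generation components y^G_{1,k} and y^G_{2,k}(w), all demand-response components x_k(w), and all blackout components z_k(w), for every generator and LSE k and every scenario w. -/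
open scoped BigOperators

variable {N G L W : Type} [Fintype N] [Fintype G] [Fintype L] [Fintype W] [DecidableEq N]

private lemma midpoint_le_of_convexOn {f : ℝ → ℝ} (hf : ConvexOn ℝ (Set.Ici (0:ℝ)) f)
    {a b : ℝ} (ha : 0 ≤ a) (hb : 0 ≤ b) : f ((a + b) / 2) ≤ (f a + f b) / 2 := by
  have h := hf.2 (Set.mem_Ici.2 ha) (Set.mem_Ici.2 hb)
    (by norm_num : (0:ℝ) ≤ 1/2) (by norm_num : (0:ℝ) ≤ 1/2) (by norm_num)
  simp only [smul_eq_mul] at h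
  have hab : (a + b) / 2 = 1/2 * a + 1/2 * b := by ring
  rw [hab]; linarith

private lemma eq_of_midpoint_eq {f : ℝ → ℝ} (hf : StrictConvexOn ℝ (Set.Ici (0:ℝ)) f)
    {a b : ℝ} (ha : 0 ≤ a) (hb : 0 ≤ b)
    (heq : f ((a + b) / 2) = (f a + f b) / 2) : a = b := by
  by_contra hne
  have h := hf.2 (Set.mem_Ici.2 ha) (Set.mem_Ici.2 hb) hne
    (by norm_num : (0:ℝ) < 1/2) (by norm_num : (0:ℝ) < 1/2) (by norm_num)
  simp only [smul_eq_mul] at h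
  have hab : (a + b) / 2 = 1/2 * a + 1/2 * b := by ring
  rw [hab] at heq; linarith

private lemma sum_avg {α : Type*} [Fintype α] (f g : α → ℝ) :
    ∑ x, (f x + g x) / 2 = ((∑ x, f x) + ∑ x, g x) / 2 := by
  rw [← Finset.sum_add_distrib, ← Finset.sum_div]

/-- Midpoint of two market points. -/
private noncomputable def midPt {N G L W : Type} (P Q : MarketPoint N G L W) :
    MarketPoint N G L W where
  yG1 k := (P.yG1 k + Q.yG1 k) / 2
  yG2 k w := (P.yG2 k w + Q.yG2 k w) / 2
  yL1 k := (P.yL1 k + Q.yL1 k) / 2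
  yL2 k w := (P.yL2 k w + Q.yL2 k w) / 2
  xdr k w := (P.xdr k w + Q.xdr k w) / 2
  zbo k w := (P.zbo k w + Q.zbo k w) / 2
  th1 i := (P.th1 i + Q.th1 i) / 2
  th2 w i := (P.th2 w i + Q.th2 w i) / 2

/-- Uniqueness of the efficient dispatch, demand-response and blackout quantities:
under Assumption 1 and p_w > 0, any two optimal solutions of (SPP-P) agree in all
generation components, all demand-response components and all blackout components. -/
theorem spp_optimal_solution_unique_in_strictly_convex_components
    (nodeG : G → N) (nodeL : L → N) (B fmax : N → N → ℝ)
    (hBsymm : ∀ i j, B i j = B j i)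
    (hfsymm : ∀ i j, fmax i j = fmax j i) (hfnonneg : ∀ i j, 0 ≤ fmax i j)
    (p : W → ℝ) (hp : ∀ w, 0 < p w) (hpsum : ∑ w, p w = 1)
    (c1 c2 : G → ℝ → ℝ) (cdr cbo : L → ℝ → ℝ)
    (hA1 : Assumption1 c1 c2 cdr cbo)
    (D : L → ℝ) (hD : ∀ k, 0 ≤ D k)
    (ren : L → W → ℝ) (hren : ∀ k w, 0 ≤ ren k w)
    (P Q : MarketPoint N G L W)
    (hPfeas : SPPFeasible nodeG nodeL B fmax D ren P)
    (hPopt : ∀ R : MarketPoint N G L W, SPPFeasible nodeG nodeL B fmax D ren R →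
        SPPObj p c1 c2 cdr cbo R ≤ SPPObj p c1 c2 cdr cbo P)
    (hQfeas : SPPFeasible nodeG nodeL B fmax D ren Q)
    (hQopt : ∀ R : MarketPoint N G L W, SPPFeasible nodeG nodeL B fmax D ren R →
        SPPObj p c1 c2 cdr cbo R ≤ SPPObj p c1 c2 cdr cbo Q) :
    (∀ k : G, P.yG1 k = Q.yG1 k) ∧ (∀ (k : G) (w : W), P.yG2 k w = Q.yG2 k w)
    ∧ (∀ (k : L) (w : W), P.xdr k w = Q.xdr k w)
    ∧ (∀ (k : L) (w : W), P.zbo k w = Q.zbo k w) := by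
  classical
  obtain ⟨hA1G1, hA1G2, hA1dr, hA1bo⟩ := hA1
  obtain ⟨hP1, hP2, hP3, hP4, hP5, hP6, hP7, hP8, hP9, hP10, hP11⟩ := id hPfeas
  obtain ⟨hQ1, hQ2, hQ3, hQ4, hQ5, hQ6, hQ7, hQ8, hQ9, hQ10, hQ11⟩ := id hQfeas
  -- Feasibility of the midpoint
  have hRfeas : SPPFeasible nodeG nodeL B fmax D ren (midPt P Q) := by
    refine ⟨?_, ?_, ?_, ?_, ?_, ?_, ?_, ?_, ?_, ?_, ?_⟩ <;> simp only [midPt]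
    · intro k; have := hP1 k; have := hQ1 k; linarith
    · intro k w; have := hP2 k w; have := hQ2 k w; linarith
    · intro k; have := hP3 k; have := hQ3 k; linarith
    · intro k w; have := hP4 k w; have := hQ4 k w; linarith
    · intro k w; have := hP5 k w; have := hQ5 k w; linarith
    · intro k w; have := hP6 k w; have := hQ6 k w; linarith
    · intro i
      have e1 : ∑ k, (if nodeG k = i then (P.yG1 k + Q.yG1 k) / 2 else 0)
          = ((∑ k, if nodeG k = i then P.yG1 k else 0)
            + ∑ k, if nodeG k = i then Q.yG1 k else 0) / 2 := by
        rw [← Finset.sum_add_distrib, Finset.sum_div]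
        exact Finset.sum_congr rfl fun k _ => by by_cases h : nodeG k = i <;> simp [h]
      have e2 : ∑ k, (if nodeL k = i then (P.yL1 k + Q.yL1 k) / 2 else 0)
          = ((∑ k, if nodeL k = i then P.yL1 k else 0)
            + ∑ k, if nodeL k = i then Q.yL1 k else 0) / 2 := by
        rw [← Finset.sum_add_distrib, Finset.sum_div]
        exact Finset.sum_congr rfl fun k _ => by by_cases h : nodeL k = i <;> simp [h]
      have e3 : ∑ j, B i j * ((P.th1 i + Q.th1 i) / 2 - (P.th1 j + Q.th1 j) / 2)
          = ((∑ j, B i j * (P.th1 i - P.th1 j)) + ∑ j, B i j * (Q.th1 i - Q.th1 j)) / 2 := by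
        rw [← Finset.sum_add_distrib, Finset.sum_div]
        exact Finset.sum_congr rfl fun j _ => by ring
      rw [e1, e2, e3]
      have := hP7 i; have := hQ7 i; linarith
    · intro w i
      have e1 : ∑ k, (if nodeG k = i then (P.yG2 k w + Q.yG2 k w) / 2 else 0)
          = ((∑ k, if nodeG k = i then P.yG2 k w else 0)
            + ∑ k, if nodeG k = i then Q.yG2 k w else 0) / 2 := by
        rw [← Finset.sum_add_distrib, Finset.sum_div]
        exact Finset.sum_congr rfl fun k _ => by by_cases h : nodeG k = i <;> simp [h]
      have e2 : ∑ k, (if nodeL k = i then (P.yL2 k w + Q.yL2 k w) / 2 else 0)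
          = ((∑ k, if nodeL k = i then P.yL2 k w else 0)
            + ∑ k, if nodeL k = i then Q.yL2 k w else 0) / 2 := by
        rw [← Finset.sum_add_distrib, Finset.sum_div]
        exact Finset.sum_congr rfl fun k _ => by by_cases h : nodeL k = i <;> simp [h]
      have e3 : ∑ j, B i j * ((P.th2 w i + Q.th2 w i) / 2 - (P.th2 w j + Q.th2 w j) / 2
              - (P.th1 i + Q.th1 i) / 2 + (P.th1 j + Q.th1 j) / 2)
          = ((∑ j, B i j * (P.th2 w i - P.th2 w j - P.th1 i + P.th1 j))
            + ∑ j, B i j * (Q.th2 w i - Q.th2 w j - Q.th1 i + Q.th1 j)) / 2 := by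
        rw [← Finset.sum_add_distrib, Finset.sum_div]
        exact Finset.sum_congr rfl fun j _ => by ring
      rw [e1, e2, e3]
      have := hP8 w i; have := hQ8 w i; linarith
    · intro i j
      have h1 := hP9 i j; have h2 := hQ9 i j
      have e : B i j * ((P.th1 i + Q.th1 i) / 2 - (P.th1 j + Q.th1 j) / 2)
          = (B i j * (P.th1 i - P.th1 j) + B i j * (Q.th1 i - Q.th1 j)) / 2 := by ring
      rw [e]; linarith
    · intro w i j
      have h1 := hP10 w i j; have h2 := hQ10 w i j
      have e : B i j * ((P.th2 w i + Q.th2 w i) / 2 - (P.th2 w j + Q.th2 w j) / 2)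
          = (B i j * (P.th2 w i - P.th2 w j) + B i j * (Q.th2 w i - Q.th2 w j)) / 2 := by ring
      rw [e]; linarith
    · intro k w; have := hP11 k w; have := hQ11 k w; linarith
  -- Objectives of the two optima coincide
  have hObjPQ : SPPObj p c1 c2 cdr cbo P = SPPObj p c1 c2 cdr cbo Q :=
    le_antisymm (hQopt P hPfeas) (hPopt Q hQfeas)
  have hRle := hPopt (midPt P Q) hRfeas
  -- Per-generator convexity inequality
  have hGle : ∀ k : G,
      c1 k ((midPt P Q).yG1 k) + ∑ w, c2 k ((midPt P Q).yG2 k w) * p w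
      ≤ ((c1 k (P.yG1 k) + ∑ w, c2 k (P.yG2 k w) * p w)
        + (c1 k (Q.yG1 k) + ∑ w, c2 k (Q.yG2 k w) * p w)) / 2 := by
    intro k
    have h1 : c1 k ((midPt P Q).yG1 k) ≤ (c1 k (P.yG1 k) + c1 k (Q.yG1 k)) / 2 := by
      simp only [midPt]
      exact midpoint_le_of_convexOn (hA1G1 k).1.convexOn (hP1 k) (hQ1 k)
    have h2 : ∑ w, c2 k ((midPt P Q).yG2 k w) * p w
        ≤ ∑ w, (c2 k (P.yG2 k w) * p w + c2 k (Q.yG2 k w) * p w) / 2 := by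
      refine Finset.sum_le_sum fun w _ => ?_
      have hm : c2 k ((midPt P Q).yG2 k w) ≤ (c2 k (P.yG2 k w) + c2 k (Q.yG2 k w)) / 2 := by
        simp only [midPt]
        exact midpoint_le_of_convexOn (hA1G2 k).1.convexOn (hP2 k w) (hQ2 k w)
      have := mul_le_mul_of_nonneg_right hm (hp w).le
      calc c2 k ((midPt P Q).yG2 k w) * p w
          ≤ ((c2 k (P.yG2 k w) + c2 k (Q.yG2 k w)) / 2) * p w := this
        _ = (c2 k (P.yG2 k w) * p w + c2 k (Q.yG2 k w) * p w) / 2 := by ring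
    rw [sum_avg] at h2
    linarith
  -- Per-LSE-scenario convexity inequality
  have hLle : ∀ (k : L) (w : W),
      (cdr k ((midPt P Q).xdr k w) + cbo k ((midPt P Q).zbo k w)) * p w
      ≤ ((cdr k (P.xdr k w) + cbo k (P.zbo k w)) * p w
        + (cdr k (Q.xdr k w) + cbo k (Q.zbo k w)) * p w) / 2 := by
    intro k w
    have h1 : cdr k ((midPt P Q).xdr k w) ≤ (cdr k (P.xdr k w) + cdr k (Q.xdr k w)) / 2 := by
      simp only [midPt]
      exact midpoint_le_of_convexOn (hA1dr k).1.convexOn (hP5 k w) (hQ5 k w)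
    have h2 : cbo k ((midPt P Q).zbo k w) ≤ (cbo k (P.zbo k w) + cbo k (Q.zbo k w)) / 2 := by
      simp only [midPt]
      exact midpoint_le_of_convexOn (hA1bo k).1.convexOn (hP6 k w) (hQ6 k w)
    have h3 : cdr k ((midPt P Q).xdr k w) + cbo k ((midPt P Q).zbo k w)
        ≤ ((cdr k (P.xdr k w) + cbo k (P.zbo k w))
          + (cdr k (Q.xdr k w) + cbo k (Q.zbo k w))) / 2 := by linarith
    calc (cdr k ((midPt P Q).xdr k w) + cbo k ((midPt P Q).zbo k w)) * p w
        ≤ (((cdr k (P.xdr k w) + cbo k (P.zbo k w))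
          + (cdr k (Q.xdr k w) + cbo k (Q.zbo k w))) / 2) * p w :=
          mul_le_mul_of_nonneg_right h3 (hp w).le
      _ = ((cdr k (P.xdr k w) + cbo k (P.zbo k w)) * p w
          + (cdr k (Q.xdr k w) + cbo k (Q.zbo k w)) * p w) / 2 := by ring
  -- Aggregate sums
  have hAle : ∑ k : G, (c1 k ((midPt P Q).yG1 k) + ∑ w, c2 k ((midPt P Q).yG2 k w) * p w)
      ≤ ∑ k : G, ((c1 k (P.yG1 k) + ∑ w, c2 k (P.yG2 k w) * p w)
        + (c1 k (Q.yG1 k) + ∑ w, c2 k (Q.yG2 k w) * p w)) / 2 :=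
    Finset.sum_le_sum fun k _ => hGle k
  have hBinle : ∀ k : L, ∑ w, (cdr k ((midPt P Q).xdr k w) + cbo k ((midPt P Q).zbo k w)) * p w
      ≤ ∑ w, ((cdr k (P.xdr k w) + cbo k (P.zbo k w)) * p w
        + (cdr k (Q.xdr k w) + cbo k (Q.zbo k w)) * p w) / 2 :=
    fun k => Finset.sum_le_sum fun w _ => hLle k w
  have hBle : ∑ k : L, ∑ w, (cdr k ((midPt P Q).xdr k w) + cbo k ((midPt P Q).zbo k w)) * p w
      ≤ ∑ k : L, ∑ w, ((cdr k (P.xdr k w) + cbo k (P.zbo k w)) * p w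
        + (cdr k (Q.xdr k w) + cbo k (Q.zbo k w)) * p w) / 2 :=
    Finset.sum_le_sum fun k _ => hBinle k
  -- Identify averaged sums
  have hAsplit : ∑ k : G, ((c1 k (P.yG1 k) + ∑ w, c2 k (P.yG2 k w) * p w)
        + (c1 k (Q.yG1 k) + ∑ w, c2 k (Q.yG2 k w) * p w)) / 2
      = ((∑ k : G, (c1 k (P.yG1 k) + ∑ w, c2 k (P.yG2 k w) * p w))
        + ∑ k : G, (c1 k (Q.yG1 k) + ∑ w, c2 k (Q.yG2 k w) * p w)) / 2 := sum_avg _ _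
  have hBsplit : ∑ k : L, ∑ w, ((cdr k (P.xdr k w) + cbo k (P.zbo k w)) * p w
        + (cdr k (Q.xdr k w) + cbo k (Q.zbo k w)) * p w) / 2
      = ((∑ k : L, ∑ w, (cdr k (P.xdr k w) + cbo k (P.zbo k w)) * p w)
        + ∑ k : L, ∑ w, (cdr k (Q.xdr k w) + cbo k (Q.zbo k w)) * p w) / 2 := by
    rw [← sum_avg]
    exact Finset.sum_congr rfl fun k _ => sum_avg _ _
  -- The midpoint objective is at least the common optimal value
  have hObjR_ge : (SPPObj p c1 c2 cdr cbo P + SPPObj p c1 c2 cdr cbo Q) / 2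
      ≤ SPPObj p c1 c2 cdr cbo (midPt P Q) := by
    simp only [SPPObj]
    rw [hAsplit] at hAle
    rw [hBsplit] at hBle
    linarith
  have hObjR_le : SPPObj p c1 c2 cdr cbo (midPt P Q)
      ≤ (SPPObj p c1 c2 cdr cbo P + SPPObj p c1 c2 cdr cbo Q) / 2 := by
    rw [← hObjPQ]; linarith
  have hObjR_eq := le_antisymm hObjR_le hObjR_ge
  -- Hence both aggregate inequalities are equalities
  have hAeq : ∑ k : G, (c1 k ((midPt P Q).yG1 k) + ∑ w, c2 k ((midPt P Q).yG2 k w) * p w)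
      = ∑ k : G, ((c1 k (P.yG1 k) + ∑ w, c2 k (P.yG2 k w) * p w)
        + (c1 k (Q.yG1 k) + ∑ w, c2 k (Q.yG2 k w) * p w)) / 2 := by
    by_contra hne
    have hlt := lt_of_le_of_ne hAle hne
    simp only [SPPObj] at hObjR_eq
    rw [hAsplit] at hlt
    rw [hBsplit] at hBle
    linarith
  have hBeq : ∑ k : L, ∑ w, (cdr k ((midPt P Q).xdr k w) + cbo k ((midPt P Q).zbo k w)) * p w
      = ∑ k : L, ∑ w, ((cdr k (P.xdr k w) + cbo k (P.zbo k w)) * p w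
        + (cdr k (Q.xdr k w) + cbo k (Q.zbo k w)) * p w) / 2 := by
    by_contra hne
    have hlt := lt_of_le_of_ne hBle hne
    simp only [SPPObj] at hObjR_eq
    rw [hAsplit] at hAle
    rw [hBsplit] at hlt
    linarith
  -- Termwise equalities for generators
  have hGeq := (Finset.sum_eq_sum_iff_of_le fun k _ => hGle k).1 hAeq
  have hGen : ∀ k : G, P.yG1 k = Q.yG1 k ∧ ∀ w, P.yG2 k w = Q.yG2 k w := by
    intro k
    have hk := hGeq k (Finset.mem_univ k)
    have h1 : c1 k ((midPt P Q).yG1 k) ≤ (c1 k (P.yG1 k) + c1 k (Q.yG1 k)) / 2 := by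
      simp only [midPt]
      exact midpoint_le_of_convexOn (hA1G1 k).1.convexOn (hP1 k) (hQ1 k)
    have h2le : ∀ w, c2 k ((midPt P Q).yG2 k w) * p w
        ≤ (c2 k (P.yG2 k w) * p w + c2 k (Q.yG2 k w) * p w) / 2 := by
      intro w
      have hm : c2 k ((midPt P Q).yG2 k w) ≤ (c2 k (P.yG2 k w) + c2 k (Q.yG2 k w)) / 2 := by
        simp only [midPt]
        exact midpoint_le_of_convexOn (hA1G2 k).1.convexOn (hP2 k w) (hQ2 k w)
      calc c2 k ((midPt P Q).yG2 k w) * p w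
          ≤ ((c2 k (P.yG2 k w) + c2 k (Q.yG2 k w)) / 2) * p w :=
            mul_le_mul_of_nonneg_right hm (hp w).le
        _ = (c2 k (P.yG2 k w) * p w + c2 k (Q.yG2 k w) * p w) / 2 := by ring
    have h2 : ∑ w, c2 k ((midPt P Q).yG2 k w) * p w
        ≤ ∑ w, (c2 k (P.yG2 k w) * p w + c2 k (Q.yG2 k w) * p w) / 2 :=
      Finset.sum_le_sum fun w _ => h2le w
    have hsplitw : ∑ w, (c2 k (P.yG2 k w) * p w + c2 k (Q.yG2 k w) * p w) / 2
        = ((∑ w, c2 k (P.yG2 k w) * p w) + ∑ w, c2 k (Q.yG2 k w) * p w) / 2 := sum_avg _ _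
    -- split the per-generator equality into the two convex pieces
    have hc1eq : c1 k ((midPt P Q).yG1 k) = (c1 k (P.yG1 k) + c1 k (Q.yG1 k)) / 2 := by
      rw [hsplitw] at h2; linarith
    have hc2sum : ∑ w, c2 k ((midPt P Q).yG2 k w) * p w
        = ∑ w, (c2 k (P.yG2 k w) * p w + c2 k (Q.yG2 k w) * p w) / 2 := by
      rw [hsplitw]; rw [hsplitw] at h2; linarith
    have hc2eq := (Finset.sum_eq_sum_iff_of_le fun w _ => h2le w).1 hc2sum
    constructor
    · have : c1 k ((P.yG1 k + Q.yG1 k) / 2) = (c1 k (P.yG1 k) + c1 k (Q.yG1 k)) / 2 := by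
        simpa only [midPt] using hc1eq
      exact eq_of_midpoint_eq (hA1G1 k).1 (hP1 k) (hQ1 k) this
    · intro w
      have hw := hc2eq w (Finset.mem_univ w)
      have hpw : p w ≠ 0 := (hp w).ne'
      have : c2 k ((midPt P Q).yG2 k w) = (c2 k (P.yG2 k w) + c2 k (Q.yG2 k w)) / 2 := by
        have h' : c2 k ((midPt P Q).yG2 k w) * p w
            = ((c2 k (P.yG2 k w) + c2 k (Q.yG2 k w)) / 2) * p w := by
          rw [hw]; ring
        exact mul_right_cancel₀ hpw h'
      have : c2 k ((P.yG2 k w + Q.yG2 k w) / 2)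
          = (c2 k (P.yG2 k w) + c2 k (Q.yG2 k w)) / 2 := by
        simpa only [midPt] using this
      exact eq_of_midpoint_eq (hA1G2 k).1 (hP2 k w) (hQ2 k w) this
  -- Termwise equalities for LSEs
  have hLouter := (Finset.sum_eq_sum_iff_of_le fun k _ => hBinle k).1 hBeq
  have hLSE : ∀ (k : L) (w : W), P.xdr k w = Q.xdr k w ∧ P.zbo k w = Q.zbo k w := by
    intro k w
    have hk := hLouter k (Finset.mem_univ k)
    have hkw := (Finset.sum_eq_sum_iff_of_le fun w _ => hLle k w).1 hk w (Finset.mem_univ w)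
    have hpw : p w ≠ 0 := (hp w).ne'
    have hsum : cdr k ((midPt P Q).xdr k w) + cbo k ((midPt P Q).zbo k w)
        = ((cdr k (P.xdr k w) + cbo k (P.zbo k w))
          + (cdr k (Q.xdr k w) + cbo k (Q.zbo k w))) / 2 := by
      have h' : (cdr k ((midPt P Q).xdr k w) + cbo k ((midPt P Q).zbo k w)) * p w
          = (((cdr k (P.xdr k w) + cbo k (P.zbo k w))
            + (cdr k (Q.xdr k w) + cbo k (Q.zbo k w))) / 2) * p w := by
        rw [hkw]; ring
      exact mul_right_cancel₀ hpw h'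
    have h1 : cdr k ((midPt P Q).xdr k w) ≤ (cdr k (P.xdr k w) + cdr k (Q.xdr k w)) / 2 := by
      simp only [midPt]
      exact midpoint_le_of_convexOn (hA1dr k).1.convexOn (hP5 k w) (hQ5 k w)
    have h2 : cbo k ((midPt P Q).zbo k w) ≤ (cbo k (P.zbo k w) + cbo k (Q.zbo k w)) / 2 := by
      simp only [midPt]
      exact midpoint_le_of_convexOn (hA1bo k).1.convexOn (hP6 k w) (hQ6 k w)
    have h1eq : cdr k ((midPt P Q).xdr k w)
        = (cdr k (P.xdr k w) + cdr k (Q.xdr k w)) / 2 := by linarith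
    have h2eq : cbo k ((midPt P Q).zbo k w)
        = (cbo k (P.zbo k w) + cbo k (Q.zbo k w)) / 2 := by linarith
    constructor
    · have : cdr k ((P.xdr k w + Q.xdr k w) / 2)
          = (cdr k (P.xdr k w) + cdr k (Q.xdr k w)) / 2 := by
        simpa only [midPt] using h1eq
      exact eq_of_midpoint_eq (hA1dr k).1 (hP5 k w) (hQ5 k w) this
    · have : cbo k ((P.zbo k w + Q.zbo k w) / 2)
          = (cbo k (P.zbo k w) + cbo k (Q.zbo k w)) / 2 := by
        simpa only [midPt] using h2eq
      exact eq_of_midpoint_eq (hA1bo k).1 (hP6 k w) (hQ6 k w) this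
  exact ⟨fun k => (hGen k).1, fun k w => (hGen k).2 w,
    fun k w => (hLSE k w).1, fun k w => (hLSE k w).2⟩
end
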